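/- arXiv:math/0608231 — 2 statements merged into one kernel-verified Lean document; each statement's English description precedes it below -/
import Mathlib

section
/- Let V be an oriented Euclidean space of even dimension d with oriented orthonormal basis e_1,...,e_d, and let Cl(V) be its Clifford algebra (with relation uv + vu + 2⟨u,v⟩ = 0). If a ∈ Cl(V) is a linear combination of basis monomials e_{i_1}⋯e_{i_k} with k < d, then the supertrace of a (acting on the spinor module) vanishes; more precisely, writing a = Σ a_{i_1⋯i_k} e_{i_1}⋯e_{i_k}, one has Str(a) = (2/i)^{d/2} · a_{1⋯d}. -/
open CliffordAlgebra
noncomputable section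

/-- Quadratic form `v ↦ -‖v‖²` on `ℝ^d`, giving `uv + vu + 2⟨u,v⟩ = 0`. -/
def Qneg (d : ℕ) : QuadraticForm ℝ (Fin d → ℝ) :=
  QuadraticMap.weightedSumSquares ℝ (fun _ : Fin d => (-1 : ℝ))

/-- The basis monomial `e_{i_1} ⋯ e_{i_k}` of the Clifford algebra, for `s = {i_1 < ... < i_k}`. -/
def cmono {d : ℕ} (s : Finset (Fin d)) : CliffordAlgebra (Qneg d) :=
  ((s.sort (· ≤ ·)).map fun i => CliffordAlgebra.ι (Qneg d) (Pi.single i 1)).prod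

def eι {d : ℕ} (i : Fin d) : CliffordAlgebra (Qneg d) :=
  CliffordAlgebra.ι (Qneg d) (Pi.single i 1)

lemma Qneg_single {d : ℕ} (i : Fin d) : Qneg d (Pi.single i 1) = -1 := by
  simp [Qneg, QuadraticMap.weightedSumSquares_apply, Pi.single_apply]

lemma polar_single {d : ℕ} {i j : Fin d} (h : i ≠ j) :
    QuadraticMap.polar (Qneg d) (Pi.single i 1) (Pi.single j 1) = 0 := by
  simp only [QuadraticMap.polar, Qneg, QuadraticMap.weightedSumSquares_apply, Pi.add_apply,
    Pi.single_apply, smul_eq_mul]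
  rw [← Finset.sum_sub_distrib, ← Finset.sum_sub_distrib]
  apply Finset.sum_eq_zero
  intro k _
  by_cases hk : k = i <;> by_cases hk' : k = j <;> simp_all

lemma e_sq {d : ℕ} (i : Fin d) : eι i * eι i = algebraMap ℝ _ (-1) := by
  rw [eι, ι_sq_scalar, Qneg_single]

lemma e_anticomm {d : ℕ} {i j : Fin d} (h : i ≠ j) : eι i * eι j = -(eι j * eι i) := by
  have := CliffordAlgebra.ι_mul_ι_add_swap (Q := Qneg d) (Pi.single i 1) (Pi.single j 1)
  rw [polar_single h, map_zero] at this
  rw [eι, eι, ← add_eq_zero_iff_eq_neg]; exact this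

def P {d : ℕ} (l : List (Fin d)) : CliffordAlgebra (Qneg d) := (l.map eι).prod

@[simp] lemma P_nil {d : ℕ} : P ([] : List (Fin d)) = 1 := rfl
@[simp] lemma P_cons {d : ℕ} (j : Fin d) (l : List (Fin d)) :
    P (j :: l) = eι j * P l := by simp [P]

lemma e_mul_P {d : ℕ} (i : Fin d) (l : List (Fin d)) :
    eι i * P l = ((-1 : ℝ) ^ (l.filter (· ≠ i)).length) • (P l * eι i) := by
  induction l with
  | nil => simp
  | cons j l ih =>
    simp only [ne_eq, decide_not, P_cons, List.filter_cons] at ih ⊢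
    by_cases h : j = i
    · subst h
      simp only [decide_true, Bool.not_true, Bool.false_eq_true, if_false]
      conv_rhs => rw [mul_assoc, ← mul_smul_comm, ← ih, ← mul_assoc]
      rw [mul_assoc]
    · have hne : i ≠ j := fun hh => h hh.symm
      simp only [h, decide_false, Bool.not_false, if_true, List.length_cons]
      rw [← mul_assoc, e_anticomm hne, neg_mul, mul_assoc, ih, mul_smul_comm,
        mul_assoc, pow_succ, mul_neg_one, neg_smul]

lemma filter_len_not_mem {d : ℕ} {i : Fin d} {l : List (Fin d)} (h : i ∉ l) :
    (l.filter (· ≠ i)).length = l.length := by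
  rw [List.filter_eq_self.2]
  intro a ha
  simp only [ne_eq, decide_not, Bool.not_eq_true', decide_eq_false_iff_not]
  exact fun he => h (he ▸ ha)

lemma filter_len_mem {d : ℕ} {i : Fin d} {l : List (Fin d)} (hn : l.Nodup) (h : i ∈ l) :
    (l.filter (· ≠ i)).length = l.length - 1 := by
  rw [show l.filter (· ≠ i) = l.erase i from ?_, List.length_erase_of_mem h]
  rw [List.Nodup.erase_eq_filter hn]
  apply List.filter_congr
  intro a _
  simp [bne, Bool.beq_eq_decide_eq]

lemma P_mul_e {d : ℕ} (i : Fin d) (l : List (Fin d)) :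
    P l * eι i = ((-1 : ℝ) ^ (l.filter (· ≠ i)).length) • (eι i * P l) := by
  rw [e_mul_P, smul_smul, ← pow_add, Even.neg_one_pow ⟨_, rfl⟩, one_smul]

lemma P_sq {d : ℕ} (l : List (Fin d)) (hn : l.Nodup) :
    P l * P l = algebraMap ℝ _ ((-1 : ℝ) ^ (l.length * (l.length + 1) / 2)) := by
  induction l with
  | nil => simp
  | cons j l ih =>
    have hj : j ∉ l := (List.nodup_cons.1 hn).1
    have hn' : l.Nodup := (List.nodup_cons.1 hn).2
    rw [P_cons, show eι j * P l * (eι j * P l) = eι j * ((P l * eι j) * P l) by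
      rw [mul_assoc, ← mul_assoc (P l)], P_mul_e, filter_len_not_mem hj,
      smul_mul_assoc, mul_smul_comm]
    rw [← mul_assoc (eι j) (eι j * P l) (P l), ← mul_assoc (eι j) (eι j) (P l), e_sq,
      mul_assoc, ih hn', ← map_mul, Algebra.smul_def, ← map_mul]
    congr 1
    have harith : (l.length + 1) * (l.length + 1 + 1) / 2
        = l.length * (l.length + 1) / 2 + (l.length + 1) := by
      rw [show (l.length + 1) * (l.length + 1 + 1) = l.length * (l.length + 1) + (l.length + 1) * 2 by ring,
        Nat.add_mul_div_right _ _ (by norm_num : (0:ℕ) < 2)]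
    rw [List.length_cons, harith, pow_add, pow_succ]
    ring

lemma cmono_eq {d : ℕ} (s : Finset (Fin d)) : cmono s = P (s.sort (· ≤ ·)) := rfl

lemma key_anticomm {d m : ℕ} (hd : d = 2 * m) (hm : 0 < m) {s : Finset (Fin d)}
    (hs : s ≠ Finset.univ) :
    ∃ i : Fin d, eι i * (cmono Finset.univ * cmono s) =
      -((cmono Finset.univ * cmono s) * eι i) := by
  -- choose i : in s if card odd, not in s if card even
  have hex : ∃ i : Fin d, Even ((s.sort (· ≤ ·)).filter (· ≠ i)).length := by
    rcases Nat.even_or_odd s.card with he | ho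
    · have : ∃ i, i ∉ s := by
        by_contra h
        push_neg at h
        exact hs (Finset.eq_univ_iff_forall.2 h)
      obtain ⟨i, hi⟩ := this
      refine ⟨i, ?_⟩
      rw [filter_len_not_mem (by simpa [Finset.mem_sort] using hi), Finset.length_sort]
      exact he
    · have hpos : 0 < s.card := by
        rcases Nat.eq_zero_or_pos s.card with h0 | h
        · rw [h0] at ho; exact absurd ho (by simp)
        · exact h
      obtain ⟨i, hi⟩ := Finset.card_pos.1 hpos
      refine ⟨i, ?_⟩
      rw [filter_len_mem (Finset.sort_nodup _ _) (by simpa [Finset.mem_sort] using hi),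
        Finset.length_sort]
      exact Nat.Odd.sub_odd ho odd_one
  obtain ⟨i, hk2⟩ := hex
  refine ⟨i, ?_⟩
  have hk1 : (((Finset.univ : Finset (Fin d)).sort (· ≤ ·)).filter (· ≠ i)).length = d - 1 := by
    rw [filter_len_mem (Finset.sort_nodup _ _) (by simp [Finset.mem_sort]), Finset.length_sort,
      Finset.card_univ, Fintype.card_fin]
  have hodd : Odd ((((Finset.univ : Finset (Fin d)).sort (· ≤ ·)).filter (· ≠ i)).length
      + ((s.sort (· ≤ ·)).filter (· ≠ i)).length) := by
    rw [hk1]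
    refine Odd.add_even ?_ hk2
    subst hd
    exact ⟨m - 1, by omega⟩
  rw [cmono_eq, cmono_eq, ← mul_assoc, e_mul_P, smul_mul_assoc, mul_assoc, e_mul_P,
    mul_smul_comm, smul_smul, ← pow_add, Odd.neg_one_pow hodd, neg_one_smul, mul_assoc]

lemma trace_zero_of_anticommute {S : Type} [AddCommGroup S] [Module ℂ S]
    [FiniteDimensional ℂ S] (A u : Module.End ℂ S) (h1 : u * A = -(A * u))
    (h2 : u * u = -1) : LinearMap.trace ℂ S A = 0 := by
  have hA : u * (A * u) = A := by
    rw [← mul_assoc, h1, neg_mul, mul_assoc, h2, mul_neg_one, neg_neg]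
  have ht : LinearMap.trace ℂ S A = - LinearMap.trace ℂ S A := by
    conv_lhs => rw [← hA]
    rw [LinearMap.trace_mul_comm, mul_assoc, h2, mul_neg_one, map_neg]
  linear_combination (1 / 2 : ℂ) * ht

lemma cmono_univ_sq {d m : ℕ} (hd : d = 2 * m) :
    cmono (Finset.univ : Finset (Fin d)) * cmono Finset.univ
      = algebraMap ℝ _ ((-1 : ℝ) ^ m) := by
  rw [cmono_eq, P_sq _ (Finset.sort_nodup _ _), Finset.length_sort, Finset.card_univ,
    Fintype.card_fin]
  congr 1
  have he : d * (d + 1) / 2 = m * (2 * m + 1) := by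
    subst hd
    rw [show 2 * m * (2 * m + 1) = m * (2 * m + 1) * 2 by ring, Nat.mul_div_cancel _ (by norm_num)]
  rw [he, mul_comm m, pow_mul, Odd.neg_one_pow ⟨m, by ring⟩]

theorem statement3 (d m : ℕ) (hd : d = 2 * m) (hm : 0 < m)
    -- `S` is the spinor module: a complex vector space of dimension `2^{d/2}`
    (S : Type) [AddCommGroup S] [Module ℂ S] [FiniteDimensional ℂ S]
    (hdim : Module.finrank ℂ S = 2 ^ m)
    -- with a ℤ/2-grading `S = S⁺ ⊕ S⁻`
    (Sp Sm : Submodule ℂ S) (hcompl : IsCompl Sp Sm)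
    -- the Clifford action, and the grading operator `ε`
    (ρ : CliffordAlgebra (Qneg d) →ₐ[ℝ] Module.End ℂ S)
    (ε : Module.End ℂ S)
    (hεp : ∀ x ∈ Sp, ε x = x) (hεm : ∀ x ∈ Sm, ε x = -x)
    -- `S⁺`/`S⁻` are the `±1` eigenspaces of the chirality element `i^{d/2} e_1⋯e_d`
    (hchir : ε = (Complex.I ^ m) • ρ (cmono Finset.univ)) :
    -- the supertrace `Str(a) = Tr_{S⁺}(a) - Tr_{S⁻}(a) = Tr(ε ∘ a)` satisfies
    -- `Str(Σ_s a_s e_s) = (2/i)^{d/2} a_{1⋯d}`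
    ∀ a : Finset (Fin d) → ℝ,
      LinearMap.trace ℂ S (ε * ρ (∑ s : Finset (Fin d), a s • cmono s)) =
        (2 / Complex.I) ^ m * (a Finset.univ : ℝ) := by
  intro a
  have key : ∀ s : Finset (Fin d), s ≠ Finset.univ →
      LinearMap.trace ℂ S (ε * ρ (cmono s)) = 0 := by
    intro s hs
    obtain ⟨i, hi⟩ := key_anticomm hd hm hs
    have h1 : ρ (eι i) * ρ (cmono Finset.univ * cmono s)
        = -(ρ (cmono Finset.univ * cmono s) * ρ (eι i)) := by
      rw [← map_mul, hi, map_neg, map_mul]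
    have h2 : ρ (eι i) * ρ (eι i) = -1 := by
      rw [← map_mul, e_sq, AlgHom.commutes, map_neg, map_one]
    have h0 := trace_zero_of_anticommute _ _ h1 h2
    rw [hchir, smul_mul_assoc, ← map_mul, map_smul, h0, smul_zero]
  rw [map_sum, Finset.mul_sum, map_sum]
  rw [Finset.sum_eq_single Finset.univ (fun s _ hs => ?_) (by simp)]
  · -- main term
    have hsm : ρ (a Finset.univ • cmono Finset.univ)
        = a Finset.univ • ρ (cmono Finset.univ) := map_smul ρ _ _
    rw [hsm, mul_smul_comm, LinearMap.map_smul_of_tower, hchir, smul_mul_assoc,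
      ← map_mul, cmono_univ_sq hd, AlgHom.commutes, Algebra.algebraMap_eq_smul_one,
      map_smul, LinearMap.map_smul_of_tower, LinearMap.trace_one, hdim]
    rw [show (2 / Complex.I) = Complex.I * ((-1) * 2) by
      rw [div_eq_mul_inv, Complex.inv_I]; ring]
    rw [mul_pow, mul_pow]
    simp only [Complex.real_smul, Complex.ofReal_pow, Complex.ofReal_neg, Complex.ofReal_one,
      Complex.ofReal_ofNat, smul_eq_mul]
    push_cast
    ring
  · -- vanishing terms
    rw [map_smul, mul_smul_comm, LinearMap.map_smul_of_tower, key s hs, smul_zero]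

end
end

section
/- (Lichnerowicz formula) For the Dirac operator D on the spinor bundle of a compact Riemannian spin manifold M, D² = Δ + s/4, where Δ is the connection Laplacian (Bochner Laplacian) of the spin connection and s is the scalar curvature. -/
/- STATEMENT 12: curvature of the spin connection.  Local model near `x_0`
(identified with `0 ∈ ℝ^d` via a synchronous orthonormal frame, so that the
connection forms `ω_i` vanish at `0`): the Levi-Civita connection acts on (frame
components of) vector fields by `∇^V_i f = ∂_i f + ω_i(x)(f(x))`, with `ω_i(x)`
skew-symmetric, and the spin connection acts on spinor fields by
`∇_i g = ∂_i g + c(Dω_i(x)) g(x)`, where `D : so(d) → Cl²` is the standard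
embedding and `c = ρ` is the Clifford action on the spinor space `S`.
If `R(e_i,e_j) = [∇^V_i, ∇^V_j]` at `0` (the Riemann curvature), then at `0`
`[∇_i, ∇_j] = c(DR(e_i,e_j))`. -/

noncomputable section

/-- `D : End(ℝ^d) → Cl(ℝ^d)`, `Dψ = (1/2) Σ_{i<j} ⟨ψ e_i, e_j⟩ e_i e_j`. -/
def Dcl (d : ℕ) (ψ : (Fin d → ℝ) →ₗ[ℝ] (Fin d → ℝ)) : CliffordAlgebra (Qneg d) :=
  (1 / 2 : ℝ) •
    ∑ i : Fin d, ∑ j ∈ Finset.univ.filter (fun j : Fin d => i < j),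
      (ψ (Pi.single i 1) j) •
        (CliffordAlgebra.ι (Qneg d) (Pi.single i 1) *
          CliffordAlgebra.ι (Qneg d) (Pi.single j 1))

/-- Partial derivative `∂_i` in the direction of the `i`-th coordinate. -/
def pd {d : ℕ} {W : Type*} [NormedAddCommGroup W] [NormedSpace ℝ W] (i : Fin d)
    (f : (Fin d → ℝ) → W) : (Fin d → ℝ) → W :=
  fun x => fderiv ℝ f x (Pi.single i 1)

/-- The Levi-Civita connection in the local trivialization: `∇^V_i f = ∂_i f + ω_i f`. -/
def nablaV {d : ℕ} (ω : Fin d → (Fin d → ℝ) → ((Fin d → ℝ) →L[ℝ] (Fin d → ℝ)))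
    (i : Fin d) (f : (Fin d → ℝ) → (Fin d → ℝ)) : (Fin d → ℝ) → (Fin d → ℝ) :=
  fun x => pd i f x + ω i x (f x)

/-- The induced spin connection: `∇_i g = ∂_i g + c(D ω_i) g`. -/
def nablaS {d : ℕ} {S : Type*} [NormedAddCommGroup S] [NormedSpace ℝ S]
    (ρ : CliffordAlgebra (Qneg d) →ₐ[ℝ] Module.End ℝ S)
    (ω : Fin d → (Fin d → ℝ) → ((Fin d → ℝ) →L[ℝ] (Fin d → ℝ)))
    (i : Fin d) (g : (Fin d → ℝ) → S) : (Fin d → ℝ) → S :=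
  fun x => pd i g x + ρ (Dcl d (ω i x).toLinearMap) (g x)


namespace Lich
open CliffordAlgebra Finset

variable {d : ℕ}

def cc (i : Fin d) : CliffordAlgebra (Qneg d) := ι (Qneg d) (Pi.single i 1)

def pδ (i j : Fin d) : ℝ := if i = j then (-2:ℝ) else 0

lemma Qneg_apply (v : Fin d → ℝ) : Qneg d v = ∑ k, (-1:ℝ) * (v k * v k) := by
  simp [Qneg, QuadraticMap.weightedSumSquares_apply, smul_eq_mul]

lemma Qneg_polar (i j : Fin d) :
    QuadraticMap.polar (Qneg d) (Pi.single i 1) (Pi.single j 1) = pδ i j := by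
  rw [QuadraticMap.polar]
  simp only [Qneg_apply, Pi.add_apply]
  rw [← Finset.sum_sub_distrib, ← Finset.sum_sub_distrib]
  have : ∀ k : Fin d, (-1:ℝ) * (((Pi.single i 1 : Fin d → ℝ) k + (Pi.single j 1 : Fin d → ℝ) k) * ((Pi.single i 1 : Fin d → ℝ) k + (Pi.single j 1 : Fin d → ℝ) k))
      - (-1) * ((Pi.single i 1 : Fin d → ℝ) k * (Pi.single i 1 : Fin d → ℝ) k) - (-1) * ((Pi.single j 1 : Fin d → ℝ) k * (Pi.single j 1 : Fin d → ℝ) k)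
      = -2 * ((Pi.single i 1 : Fin d → ℝ) k * (Pi.single j 1 : Fin d → ℝ) k) := by intro k; ring
  rw [Finset.sum_congr rfl fun k _ => this k]
  by_cases h : i = j
  · subst h
    simp [Pi.single_apply, pδ]
  · simp [Pi.single_apply, pδ, h]
    intro hji
    exact absurd hji.symm h

lemma cc_sq (i : Fin d) : cc i * cc i = -1 := by
  rw [cc, ι_sq_scalar]
  have : Qneg d (Pi.single i 1) = -1 := by
    rw [Qneg_apply]; simp [Pi.single_apply]
  rw [this, map_neg, map_one]

lemma cc_swap (i j : Fin d) : cc j * cc i = -(cc i * cc j) + pδ i j • (1 : CliffordAlgebra (Qneg d)) := by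
  have h := ι_mul_ι_add_swap (Q := Qneg d) (Pi.single i 1) (Pi.single j 1)
  rw [Qneg_polar, Algebra.algebraMap_eq_smul_one] at h
  rw [← h, cc, cc]
  abel


lemma cyc1 (i j k : Fin d) :
    cc j * cc k * cc i = cc i * cc j * cc k - pδ i j • cc k + pδ i k • cc j := by
  rw [mul_assoc, cc_swap i k, mul_add, mul_neg, ← mul_assoc, cc_swap i j, mul_smul_comm,
    mul_one, add_mul, neg_mul, smul_mul_assoc]
  simp only [one_mul]
  abel

lemma cyc2 (i j k : Fin d) :
    cc k * cc i * cc j = cc i * cc j * cc k - pδ j k • cc i + pδ i k • cc j := by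
  rw [cc_swap i k, add_mul, neg_mul, smul_mul_assoc, one_mul, mul_assoc, cc_swap j k,
    mul_add, mul_neg, mul_smul_comm, mul_one, ← mul_assoc]
  abel

section sums
variable {A : Type*} [AddCommGroup A] [Module ℝ A]

lemma sum3_rot (F : Fin d → Fin d → Fin d → A) :
    ∑ i, ∑ j, ∑ k, F i j k = ∑ j, ∑ k, ∑ i, F i j k := by
  rw [Finset.sum_comm]
  exact Finset.sum_congr rfl fun j _ => Finset.sum_comm

lemma sum_filter_half (Y : Fin d → Fin d → A) (hsymm : ∀ k l, Y l k = Y k l)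
    (hdiag : ∀ k, Y k k = 0) :
    ∑ k, ∑ l ∈ Finset.univ.filter (fun l => k < l), Y k l = (1/2 : ℝ) • ∑ k, ∑ l, Y k l := by
  have key : ∑ k, ∑ l, Y k l
      = (∑ k, ∑ l ∈ Finset.univ.filter (fun l => k < l), Y k l)
        + ∑ k, ∑ l ∈ Finset.univ.filter (fun l => k < l), Y k l := by
    have point : ∀ k l : Fin d, Y k l
        = (if k < l then Y k l else 0) + (if l < k then Y k l else 0)
          + (if k = l then Y k l else 0) := by
      intro k l
      rcases lt_trichotomy k l with h | h | h
      · simp [h, asymm h, ne_of_lt h]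
      · simp [h, lt_irrefl]
      · simp [h, asymm h, (ne_of_lt h).symm]
    calc ∑ k, ∑ l, Y k l
        = ∑ k, ∑ l, ((if k < l then Y k l else 0) + (if l < k then Y k l else 0)
            + (if k = l then Y k l else 0)) := by
          exact Finset.sum_congr rfl fun k _ => Finset.sum_congr rfl fun l _ => point k l
      _ = (∑ k, ∑ l, if k < l then Y k l else 0) + (∑ k, ∑ l, if l < k then Y k l else 0)
            + (∑ k, ∑ l, if k = l then Y k l else 0) := by
          simp [Finset.sum_add_distrib]
      _ = (∑ k, ∑ l, if k < l then Y k l else 0) + (∑ k, ∑ l, if k < l then Y k l else 0) := by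
          have h3 : (∑ k, ∑ l, if k = l then Y k l else 0) = 0 := by
            simp [Finset.sum_ite_eq, hdiag]
          have h2 : (∑ k : Fin d, ∑ l, if l < k then Y k l else 0)
              = ∑ k : Fin d, ∑ l, if k < l then Y k l else 0 := by
            rw [Finset.sum_comm]
            exact Finset.sum_congr rfl fun k _ => Finset.sum_congr rfl fun l _ => by
              by_cases h : k < l <;> simp [h, hsymm]
          rw [h3, h2, add_zero]
      _ = (∑ k, ∑ l ∈ Finset.univ.filter (fun l => k < l), Y k l)
            + ∑ k, ∑ l ∈ Finset.univ.filter (fun l => k < l), Y k l := by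
          rw [Finset.sum_congr rfl fun k _ => (Finset.sum_filter _ _).symm]
  rw [key, smul_add, ← add_smul]
  norm_num

end sums


section cliff
variable (r : Fin d → Fin d → Fin d → Fin d → ℝ)

lemma rpair (h1 : ∀ i j k l, r j i k l = - r i j k l)
    (h2 : ∀ i j k l, r i j l k = - r i j k l)
    (hb : ∀ i j k l, r i j k l + r j k i l + r k i j l = 0) :
    ∀ i j k l, r k l i j = r i j k l := by
  have flip : ∀ a b c d, r b a d c = r a b c d := by
    intro a b c d
    linarith [h1 a b d c, h2 a b c d]
  intro i j k l
  have b1 := hb i j k l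
  have b2 := hb j k l i
  have b3 := hb k l i j
  have b4 := hb l i j k
  linarith [flip k j i l, flip l k i j, flip j l i k, flip i l k j, flip k i j l,
    h1 j k i l, h1 k l i j, h1 i l k j, h2 i j k l]

lemma ric_symm (h1 : ∀ i j k l, r j i k l = - r i j k l)
    (h2 : ∀ i j k l, r i j l k = - r i j k l)
    (hb : ∀ i j k l, r i j k l + r j k i l + r k i j l = 0) :
    ∀ i l, (∑ j, r l j j i) = ∑ j, r i j j l := by
  intro i l
  refine Finset.sum_congr rfl fun j _ => ?_
  linarith [rpair r h1 h2 hb j i l j, h1 i j l j, h2 i j j l]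

/-- delta contraction -/
lemma sum_pdelta {A : Type*} [AddCommGroup A] [Module ℝ A] (i : Fin d) (f : Fin d → ℝ)
    (v : Fin d → A) :
    ∑ k, (f k * pδ i k) • v k = (-2 * f i) • v i := by
  have h : ∀ k, (f k * pδ i k) • v k = if i = k then (-2 * f i) • v i else 0 := by
    intro k
    by_cases h : i = k
    · subst h; simp [pδ]; ring_nf
    · simp [pδ, h]
  rw [Finset.sum_congr rfl fun k _ => h k, Finset.sum_ite_eq]
  simp


lemma L1 (h1 : ∀ i j k l, r j i k l = - r i j k l)
    (hb : ∀ i j k l, r i j k l + r j k i l + r k i j l = 0) (l : Fin d) :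
    ∑ i, ∑ j, ∑ k, r i j k l • (cc i * cc j * cc k)
      = ∑ i, (-2 * ∑ j, r i j j l) • cc i := by
  have e1 : (∑ i, ∑ j, ∑ k, r j k i l • (cc j * cc k * cc i))
      = ∑ i, ∑ j, ∑ k, r i j k l • (cc i * cc j * cc k) :=
    sum3_rot fun a b c => r b c a l • (cc b * cc c * cc a)
  have e2 : (∑ i, ∑ j, ∑ k, r k i j l • (cc k * cc i * cc j))
      = ∑ i, ∑ j, ∑ k, r i j k l • (cc i * cc j * cc k) := by
    rw [← e1]
    exact sum3_rot fun a b c => r c a b l • (cc c * cc a * cc b)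
  have tripled : (∑ i, ∑ j, ∑ k, (r i j k l • (cc i * cc j * cc k)
        + r j k i l • (cc j * cc k * cc i) + r k i j l • (cc k * cc i * cc j)))
      = (3:ℝ) • ∑ i, ∑ j, ∑ k, r i j k l • (cc i * cc j * cc k) := by
    simp only [Finset.sum_add_distrib]
    rw [e1, e2]
    module
  have point : ∀ i j k : Fin d, r i j k l • (cc i * cc j * cc k)
        + r j k i l • (cc j * cc k * cc i) + r k i j l • (cc k * cc i * cc j)
      = ((- r j k i l) * pδ i j) • cc k + (r j k i l * pδ i k) • cc j
        + (((- r k i j l) * pδ j k) • cc i + (r k i j l * pδ i k) • cc j) := by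
    intro i j k
    rw [cyc1 i j k, cyc2 i j k]
    have hb' := hb i j k l
    match_scalars <;> try ring
    linarith
  have S1 : (∑ i, ∑ j, ∑ k, ((- r j k i l) * pδ i j) • (cc k : CliffordAlgebra (Qneg d)))
      = ∑ i, (-2 * ∑ j, r i j j l) • cc i := by
    have swap : ∀ i : Fin d, (∑ j, ∑ k, ((- r j k i l) * pδ i j) • (cc k : CliffordAlgebra (Qneg d)))
        = ∑ k, ∑ j, ((- r j k i l) * pδ i j) • cc k := fun i => Finset.sum_comm
    rw [Finset.sum_congr rfl fun i _ => swap i]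
    have inner : ∀ i k : Fin d, (∑ j, ((- r j k i l) * pδ i j) • (cc k : CliffordAlgebra (Qneg d)))
        = (2 * r i k i l) • cc k := by
      intro i k
      rw [sum_pdelta i (fun j => - r j k i l) (fun _ => cc k)]
      ring_nf
    rw [Finset.sum_congr rfl fun i _ => Finset.sum_congr rfl fun k _ => inner i k]
    rw [Finset.sum_comm]
    refine Finset.sum_congr rfl fun k _ => ?_
    rw [← Finset.sum_smul]
    congr 1
    rw [Finset.mul_sum]
    refine Finset.sum_congr rfl fun i _ => ?_
    rw [h1 k i i l]
    ring
  have S2 : (∑ i, ∑ j, ∑ k, (r j k i l * pδ i k) • (cc j : CliffordAlgebra (Qneg d)))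
      = ∑ i, (-2 * ∑ j, r i j j l) • cc i := by
    have inner : ∀ i j : Fin d, (∑ k, (r j k i l * pδ i k) • (cc j : CliffordAlgebra (Qneg d)))
        = (-2 * r j i i l) • cc j := fun i j => sum_pdelta i (fun k => r j k i l) (fun _ => cc j)
    rw [Finset.sum_congr rfl fun i _ => Finset.sum_congr rfl fun j _ => inner i j]
    rw [Finset.sum_comm]
    refine Finset.sum_congr rfl fun j _ => ?_
    rw [← Finset.sum_smul]
    congr 1
    rw [Finset.mul_sum]
  have S3 : (∑ i, ∑ j, ∑ k, ((- r k i j l) * pδ j k) • (cc i : CliffordAlgebra (Qneg d)))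
      = ∑ i, (-2 * ∑ j, r i j j l) • cc i := by
    have inner : ∀ i j : Fin d, (∑ k, ((- r k i j l) * pδ j k) • (cc i : CliffordAlgebra (Qneg d)))
        = (2 * r j i j l) • cc i := by
      intro i j
      rw [sum_pdelta j (fun k => - r k i j l) (fun _ => cc i)]
      ring_nf
    rw [Finset.sum_congr rfl fun i _ => Finset.sum_congr rfl fun j _ => inner i j]
    refine Finset.sum_congr rfl fun i _ => ?_
    rw [← Finset.sum_smul]
    congr 1
    rw [Finset.mul_sum]
    refine Finset.sum_congr rfl fun j _ => ?_
    rw [h1 i j j l]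
    ring
  have S4 : (∑ i, ∑ j, ∑ k, (r k i j l * pδ i k) • (cc j : CliffordAlgebra (Qneg d))) = 0 := by
    have inner : ∀ i j : Fin d, (∑ k, (r k i j l * pδ i k) • (cc j : CliffordAlgebra (Qneg d)))
        = (0:ℝ) • cc j := by
      intro i j
      rw [sum_pdelta i (fun k => r k i j l) (fun _ => cc j)]
      have : r i i j l = 0 := by linarith [h1 i i j l]
      rw [this]
      norm_num
    rw [Finset.sum_congr rfl fun i _ => Finset.sum_congr rfl fun j _ => inner i j]
    simp
  have main : (3:ℝ) • (∑ i, ∑ j, ∑ k, r i j k l • (cc i * cc j * cc k))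
      = (3:ℝ) • ∑ i, (-2 * ∑ j, r i j j l) • cc i := by
    rw [← tripled, Finset.sum_congr rfl fun i _ => Finset.sum_congr rfl
      fun j _ => Finset.sum_congr rfl fun k _ => point i j k]
    simp only [Finset.sum_add_distrib]
    rw [S1, S2, S3, S4]
    module
  have h3 : (3:ℝ) ≠ 0 := by norm_num
  exact smul_right_injective _ h3 main


lemma sum4_rot {A : Type*} [AddCommMonoid A] (F : Fin d → Fin d → Fin d → Fin d → A) :
    ∑ i, ∑ j, ∑ k, ∑ l, F i j k l = ∑ l, ∑ i, ∑ j, ∑ k, F i j k l := by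
  rw [show (∑ i, ∑ j, ∑ k, ∑ l, F i j k l) = ∑ i, ∑ j, ∑ l, ∑ k, F i j k l from
    Finset.sum_congr rfl fun i _ => Finset.sum_congr rfl fun j _ => Finset.sum_comm]
  rw [show (∑ i, ∑ j, ∑ l, ∑ k, F i j k l) = ∑ i, ∑ l, ∑ j, ∑ k, F i j k l from
    Finset.sum_congr rfl fun i _ => Finset.sum_comm]
  exact Finset.sum_comm

lemma pδ_comm (i l : Fin d) : pδ i l = pδ l i := by
  unfold pδ
  by_cases h : i = l
  · simp [h]
  · rw [if_neg h, if_neg (fun hh => h hh.symm)]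

lemma ric_contract (hsym : ∀ i l, (∑ j, r l j j i) = ∑ j, r i j j l) :
    ∑ l, ∑ i, (∑ j, r i j j l) • (cc i * cc l)
      = (-(∑ i, ∑ j, r i j j i)) • (1 : CliffordAlgebra (Qneg d)) := by
  have swap : (∑ l, ∑ i, (∑ j, r i j j l) • (cc i * cc l))
      = ∑ l, ∑ i, (∑ j, r l j j i) • (cc l * cc i) := Finset.sum_comm
  have expand : (∑ l, ∑ i, (∑ j, r i j j l) • (cc i * cc l))
        + (∑ l, ∑ i, (∑ j, r i j j l) • (cc i * cc l))
      = ∑ l, ∑ i, ((∑ j, r i j j l) * pδ l i) • (1 : CliffordAlgebra (Qneg d)) := by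
    nth_rewrite 2 [swap]
    rw [← Finset.sum_add_distrib]
    refine Finset.sum_congr rfl fun l _ => ?_
    rw [← Finset.sum_add_distrib]
    refine Finset.sum_congr rfl fun i _ => ?_
    rw [hsym i l, ← smul_add, cc_swap i l]
    rw [show cc i * cc l + (-(cc i * cc l) + pδ i l • (1 : CliffordAlgebra (Qneg d)))
      = pδ i l • 1 by abel]
    rw [smul_smul, mul_comm ((∑ j, r i j j l)) _, pδ_comm, mul_comm]
  have contract : (∑ l : Fin d, ∑ i, ((∑ j, r i j j l) * pδ l i)
        • (1 : CliffordAlgebra (Qneg d)))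
      = (-2 * ∑ l, ∑ j, r l j j l) • (1 : CliffordAlgebra (Qneg d)) := by
    rw [Finset.sum_congr rfl fun l (_ : l ∈ Finset.univ) =>
      sum_pdelta (d := d) l (fun i => ∑ j, r i j j l) (fun _ => (1 : CliffordAlgebra (Qneg d)))]
    rw [← Finset.sum_smul, Finset.mul_sum]
  have two : (∑ l, ∑ i, (∑ j, r i j j l) • (cc i * cc l))
        + (∑ l, ∑ i, (∑ j, r i j j l) • (cc i * cc l))
      = (-(∑ i, ∑ j, r i j j i)) • (1 : CliffordAlgebra (Qneg d))
        + (-(∑ i, ∑ j, r i j j i)) • (1 : CliffordAlgebra (Qneg d)) := by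
    rw [expand, contract, ← add_smul]
    congr 1
    ring
  have h2 : (2:ℝ) • (∑ l, ∑ i, (∑ j, r i j j l) • (cc i * cc l))
      = (2:ℝ) • ((-(∑ i, ∑ j, r i j j i)) • (1 : CliffordAlgebra (Qneg d))) := by
    rw [two_smul, two_smul]
    exact two
  exact smul_right_injective _ (by norm_num : (2:ℝ) ≠ 0) h2


lemma cliff_main (h1 : ∀ i j k l, r j i k l = - r i j k l)
    (h2 : ∀ i j k l, r i j l k = - r i j k l)
    (hb : ∀ i j k l, r i j k l + r j k i l + r k i j l = 0) :
    ∑ i, ∑ j, (cc i * cc j) *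
        ((1/2:ℝ) • ∑ k, ∑ l ∈ Finset.univ.filter (fun l => k < l), r i j k l • (cc k * cc l))
      = ((∑ i, ∑ j, r i j j i)/2) • (1 : CliffordAlgebra (Qneg d)) := by
  have hsym := ric_symm r h1 h2 hb
  have inner_half : ∀ i j : Fin d,
      (∑ k, ∑ l ∈ Finset.univ.filter (fun l => k < l), r i j k l • (cc k * cc l))
        = (1/2:ℝ) • ∑ k, ∑ l, r i j k l • (cc k * cc l) := by
    intro i j
    refine sum_filter_half _ ?_ ?_
    · intro k l
      by_cases hkl : k = l
      · subst hkl; rfl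
      · rw [h2 i j k l, cc_swap k l, show pδ k l = 0 from if_neg hkl, zero_smul, add_zero,
          smul_neg, neg_smul, neg_neg]
    · intro k
      have : r i j k k = 0 := by linarith [h2 i j k k]
      rw [this, zero_smul]
  calc ∑ i, ∑ j, (cc i * cc j) *
        ((1/2:ℝ) • ∑ k, ∑ l ∈ Finset.univ.filter (fun l => k < l), r i j k l • (cc k * cc l))
      = ∑ i, ∑ j, (1/4:ℝ) • ∑ k, ∑ l, r i j k l • (cc i * cc j * cc k * cc l) := by
        refine Finset.sum_congr rfl fun i _ => Finset.sum_congr rfl fun j _ => ?_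
        rw [inner_half i j, smul_smul, mul_smul_comm,
          show (1/2:ℝ)*(1/2:ℝ) = 1/4 by norm_num]
        congr 1
        rw [Finset.mul_sum]
        refine Finset.sum_congr rfl fun k _ => ?_
        rw [Finset.mul_sum]
        refine Finset.sum_congr rfl fun l _ => ?_
        rw [mul_smul_comm, ← mul_assoc]
    _ = (1/4:ℝ) • ∑ l, ∑ i, ∑ j, ∑ k, r i j k l • (cc i * cc j * cc k * cc l) := by
        rw [Finset.sum_congr rfl fun i (_ : i ∈ Finset.univ) => (Finset.smul_sum
          (r := (1/4:ℝ)) (s := Finset.univ)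
          (f := fun j => ∑ k, ∑ l, r i j k l • (cc i * cc j * cc k * cc l))).symm]
        rw [← Finset.smul_sum]
        congr 1
        exact sum4_rot (fun i j k l => r i j k l • (cc i * cc j * cc k * cc l))
    _ = (1/4:ℝ) • ∑ l, (∑ i, ∑ j, ∑ k, r i j k l • (cc i * cc j * cc k)) * cc l := by
        congr 1
        refine Finset.sum_congr rfl fun l _ => ?_
        rw [Finset.sum_mul]
        refine Finset.sum_congr rfl fun i _ => ?_
        rw [Finset.sum_mul]
        refine Finset.sum_congr rfl fun j _ => ?_
        rw [Finset.sum_mul]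
        exact Finset.sum_congr rfl fun k _ => (smul_mul_assoc _ _ _).symm
    _ = (1/4:ℝ) • ∑ l, (∑ i, (-2 * ∑ j, r i j j l) • cc i) * cc l := by
        rw [Finset.sum_congr rfl fun l (_ : l ∈ Finset.univ) => by rw [L1 r h1 hb l]]
    _ = (1/4:ℝ) • ((-2:ℝ) • ∑ l, ∑ i, (∑ j, r i j j l) • (cc i * cc l)) := by
        congr 1
        rw [Finset.smul_sum]
        refine Finset.sum_congr rfl fun l _ => ?_
        rw [Finset.sum_mul, Finset.smul_sum]
        refine Finset.sum_congr rfl fun i _ => ?_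
        rw [smul_mul_assoc, ← smul_smul]
    _ = ((∑ i, ∑ j, r i j j i)/2) • (1 : CliffordAlgebra (Qneg d)) := by
        rw [ric_contract r hsym, smul_smul, smul_smul]
        congr 1
        ring

end cliff

section analysis

variable {S : Type*} [NormedAddCommGroup S] [NormedSpace ℝ S] [FiniteDimensional ℝ S]

lemma Dcl_add (ψ φ : (Fin d → ℝ) →ₗ[ℝ] (Fin d → ℝ)) :
    Dcl d (ψ + φ) = Dcl d ψ + Dcl d φ := by
  unfold Dcl
  rw [← smul_add]
  congr 1
  rw [← Finset.sum_add_distrib]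
  refine Finset.sum_congr rfl fun i _ => ?_
  rw [← Finset.sum_add_distrib]
  refine Finset.sum_congr rfl fun j _ => ?_
  rw [LinearMap.add_apply, Pi.add_apply, add_smul]

lemma Dcl_neg (ψ : (Fin d → ℝ) →ₗ[ℝ] (Fin d → ℝ)) : Dcl d (-ψ) = - Dcl d ψ := by
  unfold Dcl
  rw [← smul_neg]
  congr 1
  rw [← Finset.sum_neg_distrib]
  refine Finset.sum_congr rfl fun i _ => ?_
  rw [← Finset.sum_neg_distrib]
  refine Finset.sum_congr rfl fun j _ => ?_
  rw [LinearMap.neg_apply, Pi.neg_apply, neg_smul]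

lemma Dcl_sub (ψ φ : (Fin d → ℝ) →ₗ[ℝ] (Fin d → ℝ)) :
    Dcl d (ψ - φ) = Dcl d ψ - Dcl d φ := by
  rw [sub_eq_add_neg, Dcl_add, Dcl_neg, sub_eq_add_neg]

lemma Dcl_smul (c : ℝ) (ψ : (Fin d → ℝ) →ₗ[ℝ] (Fin d → ℝ)) :
    Dcl d (c • ψ) = c • Dcl d ψ := by
  unfold Dcl
  rw [smul_comm]
  congr 1
  rw [Finset.smul_sum]
  refine Finset.sum_congr rfl fun i _ => ?_
  rw [Finset.smul_sum]
  refine Finset.sum_congr rfl fun j _ => ?_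
  rw [LinearMap.smul_apply, Pi.smul_apply, smul_smul, smul_eq_mul]

lemma Dcl_zero : Dcl d (0 : (Fin d → ℝ) →ₗ[ℝ] (Fin d → ℝ)) = 0 := by
  unfold Dcl
  simp

/-- `T ↦ ρ (Dcl Tᴸ)` as a continuous linear map into `S →L[ℝ] S`. -/
def PhiL (ρ : CliffordAlgebra (Qneg d) →ₐ[ℝ] Module.End ℝ S) :
    ((Fin d → ℝ) →L[ℝ] (Fin d → ℝ)) →L[ℝ] (S →L[ℝ] S) :=
  LinearMap.toContinuousLinearMap
    { toFun := fun T => LinearMap.toContinuousLinearMap (ρ (Dcl d T.toLinearMap))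
      map_add' := by
        intro T U
        simp only [ContinuousLinearMap.coe_add, Dcl_add, map_add]
      map_smul' := by
        intro c T
        simp only [ContinuousLinearMap.coe_smul, Dcl_smul, map_smul, RingHom.id_apply] }

lemma PhiL_apply (ρ : CliffordAlgebra (Qneg d) →ₐ[ℝ] Module.End ℝ S)
    (T : (Fin d → ℝ) →L[ℝ] (Fin d → ℝ)) (v : S) :
    PhiL ρ T v = ρ (Dcl d T.toLinearMap) v := rfl

lemma nablaS_at0 (ρ : CliffordAlgebra (Qneg d) →ₐ[ℝ] Module.End ℝ S)
    (ω : Fin d → (Fin d → ℝ) → ((Fin d → ℝ) →L[ℝ] (Fin d → ℝ))) (i : Fin d)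
    (hs : ω i 0 = 0) (h : (Fin d → ℝ) → S) :
    nablaS ρ ω i h 0 = pd i h 0 := by
  unfold nablaS
  rw [hs]
  have : ((0 : (Fin d → ℝ) →L[ℝ] (Fin d → ℝ)) : (Fin d → ℝ) →ₗ[ℝ] (Fin d → ℝ)) = 0 := rfl
  rw [this, Dcl_zero, map_zero, LinearMap.zero_apply, add_zero]

lemma pd_contDiff {g : (Fin d → ℝ) → S} (hg : ContDiff ℝ (⊤ : ℕ∞) g) (j : Fin d) :
    ContDiff ℝ (⊤ : ℕ∞) (pd j g) := by
  have h1 : ContDiff ℝ (⊤ : ℕ∞) (fderiv ℝ g) := hg.fderiv_right (by simp)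
  exact (ContinuousLinearMap.apply ℝ S (Pi.single j 1)).contDiff.comp h1

lemma pd_symm {g : (Fin d → ℝ) → S} (hg : ContDiff ℝ (⊤ : ℕ∞) g) (i j : Fin d) :
    pd i (pd j g) 0 = pd j (pd i g) 0 := by
  have hd : ∀ y, HasFDerivAt g (fderiv ℝ g y) y := fun y =>
    (hg.differentiable (by simp) y).hasFDerivAt
  have hf' : ContDiff ℝ (⊤ : ℕ∞) (fderiv ℝ g) := hg.fderiv_right (by simp)
  have h2 : HasFDerivAt (fderiv ℝ g) (fderiv ℝ (fderiv ℝ g) 0) 0 :=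
    (hf'.differentiable (by simp) 0).hasFDerivAt
  have hsymm := second_derivative_symmetric hd h2 (Pi.single i 1) (Pi.single j 1)
  have key : ∀ a : Fin d, HasFDerivAt (pd a g)
      ((ContinuousLinearMap.apply ℝ S (Pi.single a 1)).comp (fderiv ℝ (fderiv ℝ g) 0)) 0 := by
    intro a
    have h := (ContinuousLinearMap.apply ℝ S (Pi.single a 1)).hasFDerivAt.comp 0 h2
    exact h.congr_of_eventuallyEq (Filter.Eventually.of_forall fun y => rfl)
  have e1 : pd i (pd j g) 0 = fderiv ℝ (fderiv ℝ g) 0 (Pi.single i 1) (Pi.single j 1) := by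
    show fderiv ℝ (pd j g) 0 (Pi.single i 1) = _
    rw [(key j).fderiv]
    rfl
  have e2 : pd j (pd i g) 0 = fderiv ℝ (fderiv ℝ g) 0 (Pi.single j 1) (Pi.single i 1) := by
    show fderiv ℝ (pd i g) 0 (Pi.single j 1) = _
    rw [(key i).fderiv]
    rfl
  rw [e1, e2, hsymm]


lemma cc_anticomm_end (ρ : CliffordAlgebra (Qneg d) →ₐ[ℝ] Module.End ℝ S)
    (i j : Fin d) (v : S) :
    ρ (cc i) (ρ (cc j) v) + ρ (cc j) (ρ (cc i) v) = pδ i j • v := by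
  have h : (cc i * cc j) + (cc j * cc i) = pδ i j • (1 : CliffordAlgebra (Qneg d)) := by
    rw [cc_swap i j]
    abel
  have := congrArg (fun z => (ρ z) v) h
  simp only [map_add, map_smul, map_one, LinearMap.add_apply, map_mul,
    LinearMap.smul_apply, Module.End.one_apply, Module.End.mul_apply] at this
  exact this

lemma claim1 (ρ : CliffordAlgebra (Qneg d) →ₐ[ℝ] Module.End ℝ S)
    (u : Fin d → Fin d → S) (hu : ∀ i j, u i j = u j i) :
    ∑ i, ∑ j, ρ (cc i) (ρ (cc j) (u i j)) = -∑ i, u i i := by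
  have e : (∑ i, ∑ j, ρ (cc i) (ρ (cc j) (u i j)))
      = ∑ i, ∑ j, ρ (cc j) (ρ (cc i) (u i j)) := by
    rw [Finset.sum_comm]
    exact Finset.sum_congr rfl fun i _ => Finset.sum_congr rfl fun j _ => by rw [hu j i]
  have two : (2:ℝ) • (∑ i, ∑ j, ρ (cc i) (ρ (cc j) (u i j)))
      = (2:ℝ) • (-∑ i, u i i) := by
    rw [two_smul, two_smul]
    nth_rewrite 2 [e]
    rw [← Finset.sum_add_distrib]
    have step : ∀ i : Fin d, (∑ j, ρ (cc i) (ρ (cc j) (u i j)))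
          + (∑ j, ρ (cc j) (ρ (cc i) (u i j))) = ((-2:ℝ) * 1) • u i i := by
      intro i
      rw [← Finset.sum_add_distrib]
      rw [Finset.sum_congr rfl fun j (_ : j ∈ Finset.univ) => cc_anticomm_end ρ i j (u i j)]
      rw [Finset.sum_congr rfl fun j (_ : j ∈ Finset.univ) =>
        (show pδ i j • u i j = ((1:ℝ) * pδ i j) • u i j by rw [one_mul])]
      exact sum_pdelta i (fun _ => (1:ℝ)) (u i)
    rw [Finset.sum_congr rfl fun i (_ : i ∈ Finset.univ) => step i]
    have expand2 : ∀ i : Fin d, ((-2:ℝ) * 1) • u i i = -(u i i) + -(u i i) := by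
      intro i
      rw [show ((-2:ℝ)*1 : ℝ) = -2 by norm_num, show (-2:ℝ) • u i i = -((2:ℝ) • u i i) by
        rw [neg_smul], two_smul]
      abel
    rw [Finset.sum_congr rfl fun i (_ : i ∈ Finset.univ) => expand2 i]
    rw [Finset.sum_add_distrib, Finset.sum_neg_distrib]
  exact smul_right_injective _ (by norm_num : (2:ℝ) ≠ 0) two

lemma claimK (ψ : Fin d → Fin d → ((Fin d → ℝ) →ₗ[ℝ] (Fin d → ℝ)))
    (Rm : Fin d → Fin d → ((Fin d → ℝ) →ₗ[ℝ] (Fin d → ℝ)))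
    (hrel : ∀ i j, Rm i j = ψ i j - ψ j i)
    (h1 : ∀ i j k l : Fin d, (Rm j i (Pi.single k 1)) l = -(Rm i j (Pi.single k 1)) l)
    (h2 : ∀ i j k l : Fin d, (Rm i j (Pi.single l 1)) k = -(Rm i j (Pi.single k 1)) l)
    (hb : ∀ i j k l : Fin d, (Rm i j (Pi.single k 1)) l + (Rm j k (Pi.single i 1)) l
      + (Rm k i (Pi.single j 1)) l = 0) :
    ∑ i, ∑ j, cc i * cc j * Dcl d (ψ i j)
      = -(∑ i, Dcl d (ψ i i))
        + ((∑ i, ∑ j, (Rm i j (Pi.single j 1)) i)/2/2) • (1 : CliffordAlgebra (Qneg d)) := by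
  have hmain : ∑ i, ∑ j, (cc i * cc j) * Dcl d (Rm i j)
      = ((∑ i, ∑ j, (Rm i j (Pi.single j 1)) i)/2) • (1 : CliffordAlgebra (Qneg d)) :=
    cliff_main (fun i j k l => (Rm i j (Pi.single k 1)) l) h1 h2 hb
  have e : (∑ i, ∑ j, cc i * cc j * Dcl d (ψ i j))
      = ∑ i, ∑ j, cc j * cc i * Dcl d (ψ j i) := by
    rw [Finset.sum_comm]
  have two : (2:ℝ) • (∑ i, ∑ j, cc i * cc j * Dcl d (ψ i j))
      = (2:ℝ) • (-(∑ i, Dcl d (ψ i i))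
        + ((∑ i, ∑ j, (Rm i j (Pi.single j 1)) i)/2/2) • (1 : CliffordAlgebra (Qneg d))) := by
    rw [two_smul]
    nth_rewrite 2 [e]
    rw [← Finset.sum_add_distrib]
    have point : ∀ i j : Fin d, cc i * cc j * Dcl d (ψ i j) + cc j * cc i * Dcl d (ψ j i)
        = (cc i * cc j) * Dcl d (Rm i j) + ((1:ℝ) * pδ i j) • Dcl d (ψ j i) := by
      intro i j
      rw [hrel i j, Dcl_sub, cc_swap i j, mul_sub, add_mul, smul_mul_assoc, one_mul, one_mul,
        neg_mul]
      abel
    have pointi : ∀ i : Fin d, ((∑ j, cc i * cc j * Dcl d (ψ i j))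
          + ∑ j, cc j * cc i * Dcl d (ψ j i))
        = (∑ j, (cc i * cc j) * Dcl d (Rm i j)) + ∑ j, ((1:ℝ) * pδ i j) • Dcl d (ψ j i) := by
      intro i
      rw [← Finset.sum_add_distrib, ← Finset.sum_add_distrib]
      exact Finset.sum_congr rfl fun j _ => point i j
    rw [Finset.sum_congr rfl fun i (_ : i ∈ Finset.univ) => pointi i]
    rw [Finset.sum_add_distrib, hmain]
    rw [Finset.sum_congr rfl fun i (_ : i ∈ Finset.univ) =>
      sum_pdelta i (fun _ => (1:ℝ)) (fun j => Dcl d (ψ j i))]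
    have : (∑ i, (-2 * 1 : ℝ) • Dcl d (ψ i i)) = (2:ℝ) • (-(∑ i, Dcl d (ψ i i))) := by
      rw [smul_neg, Finset.smul_sum, ← Finset.sum_neg_distrib]
      refine Finset.sum_congr rfl fun i _ => ?_
      rw [← neg_smul]
      norm_num
    rw [this, smul_add, add_comm]
    congr 1
    rw [smul_smul]
    congr 1
    ring
  exact smul_right_injective _ (by norm_num : (2:ℝ) ≠ 0) two

end analysis
end Lich

/- STATEMENT 13 (Lichnerowicz formula): `D² = Δ + s/4`, where `D = Σ_i c(e*_i)∇_i`
is the Dirac operator, `Δ` the connection Laplacian of the spin connection, and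
`s = Σ_{i,j}⟨R(e_i,e_j)e_j, e_i⟩` the scalar curvature.  Formalized at the center
`x_0 = 0` of a synchronous orthonormal frame in the local model above (where at
`0` one has `Δ = -Σ_i ∇_i∇_i`, the terms `∇_{∇_{e_i}e_i}` vanishing since the
Christoffel symbols vanish at `0`). -/
theorem statement13 (d : ℕ) (S : Type*) [NormedAddCommGroup S] [NormedSpace ℝ S]
    [FiniteDimensional ℝ S]
    (ρ : CliffordAlgebra (Qneg d) →ₐ[ℝ] Module.End ℝ S)
    (ω : Fin d → (Fin d → ℝ) → ((Fin d → ℝ) →L[ℝ] (Fin d → ℝ)))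
    (hsmooth : ∀ i, ContDiff ℝ (⊤ : ℕ∞) (ω i))
    (hsync : ∀ i, ω i 0 = 0)
    (hskew : ∀ i x u v,
      dotProduct (ω i x u) v = -dotProduct u (ω i x v))
    (R : Fin d → Fin d → ((Fin d → ℝ) →ₗ[ℝ] (Fin d → ℝ)))
    (hR : ∀ i j (f : (Fin d → ℝ) → (Fin d → ℝ)), ContDiff ℝ (⊤ : ℕ∞) f →
      nablaV ω i (nablaV ω j f) 0 - nablaV ω j (nablaV ω i f) 0 = R i j (f 0))
    -- symmetries of the Riemann tensor (the connection being metric and torsion-free)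
    (hRskew : ∀ i j u v,
      dotProduct (R i j u) v = -dotProduct u (R i j v))
    (hRanti : ∀ i j, R i j = -R j i)
    (hbianchi : ∀ i j k : Fin d,
      R i j (Pi.single k 1) + R j k (Pi.single i 1) + R k i (Pi.single j 1) = 0) :
    -- `D²g = Δg + (s/4) g` at `0`
    ∀ g : (Fin d → ℝ) → S, ContDiff ℝ (⊤ : ℕ∞) g →
      (∑ i, ρ (CliffordAlgebra.ι (Qneg d) (Pi.single i 1))
          (nablaS ρ ω i (fun y =>
            ∑ j, ρ (CliffordAlgebra.ι (Qneg d) (Pi.single j 1)) (nablaS ρ ω j g y)) 0)) =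
        -(∑ i, nablaS ρ ω i (nablaS ρ ω i g) 0) +
          ((∑ i, ∑ j, (R i j (Pi.single j 1)) i) / 4) • g 0 := by
  intro g hg
  have hgd : Differentiable ℝ g := hg.differentiable (by simp)
  have hg0 : HasFDerivAt g (fderiv ℝ g 0) 0 := (hgd 0).hasFDerivAt
  have hΩ : ∀ j, HasFDerivAt (ω j) (fderiv ℝ (ω j) 0) 0 := fun j =>
    ((hsmooth j).differentiable (by simp) 0).hasFDerivAt
  -- symmetries of the curvature coefficients
  have h1 : ∀ i j k l : Fin d, (R j i) (Pi.single k 1) l = -((R i j) (Pi.single k 1) l) := by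
    intro i j k l
    rw [hRanti j i]
    simp
  have h2 : ∀ i j k l : Fin d, (R i j) (Pi.single l 1) k = -((R i j) (Pi.single k 1) l) := by
    intro i j k l
    have hs := hRskew i j (Pi.single l 1) (Pi.single k 1)
    rw [dotProduct_single, single_dotProduct] at hs
    linarith
  have hb : ∀ i j k l : Fin d, (R i j) (Pi.single k 1) l + (R j k) (Pi.single i 1) l
      + (R k i) (Pi.single j 1) l = 0 := by
    intro i j k l
    have h := congrFun (hbianchi i j k) l
    simpa using h
  -- the curvature in terms of derivatives of the connection forms
  have hRA : ∀ i j : Fin d, R i j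
      = (fderiv ℝ (ω j) 0 (Pi.single i 1)).toLinearMap
        - (fderiv ℝ (ω i) 0 (Pi.single j 1)).toLinearMap := by
    intro i j
    apply LinearMap.ext
    intro u
    have hval := hR i j (fun _ => u) contDiff_const
    have hnv : ∀ a b : Fin d, nablaV ω a (nablaV ω b (fun _ : Fin d → ℝ => u)) 0
        = fderiv ℝ (ω b) 0 (Pi.single a 1) u := by
      intro a b
      have hfun : nablaV ω b (fun _ : Fin d → ℝ => u) = fun x => ω b x u := by
        funext x
        show pd b (fun _ : Fin d → ℝ => u) x + ω b x u = ω b x u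
        have hz : pd b (fun _ : Fin d → ℝ => u) x = 0 := by
          show fderiv ℝ (fun _ : Fin d → ℝ => u) x (Pi.single b 1) = 0
          rw [fderiv_fun_const]
          simp
        rw [hz, zero_add]
      rw [hfun]
      have hd : HasFDerivAt (fun x => ω b x u)
          ((ContinuousLinearMap.apply ℝ (Fin d → ℝ) u).comp (fderiv ℝ (ω b) 0)) 0 := by
        have h := (ContinuousLinearMap.apply ℝ (Fin d → ℝ) u).hasFDerivAt.comp 0 (hΩ b)
        exact h.congr_of_eventuallyEq (Filter.Eventually.of_forall fun y => rfl)
      show pd a (fun x => ω b x u) 0 + ω a 0 ((fun x => ω b x u) 0) = _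
      rw [hsync a]
      show fderiv ℝ (fun x => ω b x u) 0 (Pi.single a 1) + _ = _
      rw [hd.fderiv]
      simp
    rw [hnv i j, hnv j i] at hval
    rw [← hval]
    simp
  -- derivative of the zeroth-order term of the spin connection
  have homega : ∀ j : Fin d,
      HasFDerivAt (fun x => (ρ (Dcl d ((ω j x).toLinearMap))) (g x))
        (((Lich.PhiL ρ).comp (fderiv ℝ (ω j) 0)).flip (g 0)) 0 := by
    intro j
    have hc : HasFDerivAt (fun x => Lich.PhiL ρ (ω j x))
        ((Lich.PhiL ρ).comp (fderiv ℝ (ω j) 0)) 0 := by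
      have h := (Lich.PhiL ρ).hasFDerivAt.comp 0 (hΩ j)
      exact h.congr_of_eventuallyEq (Filter.Eventually.of_forall fun y => rfl)
    have h := hc.clm_apply hg0
    rw [hsync j, map_zero, ContinuousLinearMap.zero_comp, zero_add] at h
    exact h
  have hnabla : ∀ j : Fin d, HasFDerivAt (nablaS ρ ω j g)
      (fderiv ℝ (pd j g) 0 + ((Lich.PhiL ρ).comp (fderiv ℝ (ω j) 0)).flip (g 0)) 0 := by
    intro j
    have h1' : HasFDerivAt (pd j g) (fderiv ℝ (pd j g) 0) 0 :=
      ((Lich.pd_contDiff hg j).differentiable (by simp) 0).hasFDerivAt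
    exact h1'.add (homega j)
  have hH : HasFDerivAt
      (fun y => ∑ j, (ρ (CliffordAlgebra.ι (Qneg d) (Pi.single j 1))) (nablaS ρ ω j g y))
      (∑ j, (LinearMap.toContinuousLinearMap
          (ρ (CliffordAlgebra.ι (Qneg d) (Pi.single j 1)))).comp
        (fderiv ℝ (pd j g) 0 + ((Lich.PhiL ρ).comp (fderiv ℝ (ω j) 0)).flip (g 0))) 0 := by
    apply HasFDerivAt.fun_sum
    intro j _
    have h := (LinearMap.toContinuousLinearMap
      (ρ (CliffordAlgebra.ι (Qneg d) (Pi.single j 1)))).hasFDerivAt.comp 0 (hnabla j)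
    exact h.congr_of_eventuallyEq (Filter.Eventually.of_forall fun y => rfl)
  have hpdH : ∀ i : Fin d,
      pd i (fun y => ∑ j, (ρ (CliffordAlgebra.ι (Qneg d) (Pi.single j 1)))
        (nablaS ρ ω j g y)) 0
      = ∑ j, (ρ (CliffordAlgebra.ι (Qneg d) (Pi.single j 1)))
          (pd i (pd j g) 0
            + (ρ (Dcl d (fderiv ℝ (ω j) 0 (Pi.single i 1)).toLinearMap)) (g 0)) := by
    intro i
    show fderiv ℝ _ 0 (Pi.single i 1) = _
    rw [hH.fderiv, ContinuousLinearMap.sum_apply]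
    rfl
  have hnabla_fderiv : ∀ i j : Fin d, pd i (nablaS ρ ω j g) 0
      = pd i (pd j g) 0
        + (ρ (Dcl d (fderiv ℝ (ω j) 0 (Pi.single i 1)).toLinearMap)) (g 0) := by
    intro i j
    show fderiv ℝ (nablaS ρ ω j g) 0 (Pi.single i 1) = _
    rw [(hnabla j).fderiv]
    rfl
  have rhs_eval : ∀ i : Fin d, nablaS ρ ω i (nablaS ρ ω i g) 0
      = pd i (pd i g) 0
        + (ρ (Dcl d (fderiv ℝ (ω i) 0 (Pi.single i 1)).toLinearMap)) (g 0) := by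
    intro i
    rw [Lich.nablaS_at0 ρ ω i (hsync i), hnabla_fderiv i i]
  calc (∑ i, ρ (CliffordAlgebra.ι (Qneg d) (Pi.single i 1))
          (nablaS ρ ω i (fun y =>
            ∑ j, ρ (CliffordAlgebra.ι (Qneg d) (Pi.single j 1)) (nablaS ρ ω j g y)) 0))
      = ∑ i, ρ (CliffordAlgebra.ι (Qneg d) (Pi.single i 1))
          (pd i (fun y =>
            ∑ j, ρ (CliffordAlgebra.ι (Qneg d) (Pi.single j 1)) (nablaS ρ ω j g y)) 0) := by
        refine Finset.sum_congr rfl fun i _ => ?_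
        rw [Lich.nablaS_at0 ρ ω i (hsync i)]
    _ = ∑ i, ∑ j, ρ (CliffordAlgebra.ι (Qneg d) (Pi.single i 1))
          (ρ (CliffordAlgebra.ι (Qneg d) (Pi.single j 1))
            (pd i (pd j g) 0
              + (ρ (Dcl d (fderiv ℝ (ω j) 0 (Pi.single i 1)).toLinearMap)) (g 0))) := by
        refine Finset.sum_congr rfl fun i _ => ?_
        rw [hpdH i, map_sum]
    _ = (∑ i, ∑ j, ρ (CliffordAlgebra.ι (Qneg d) (Pi.single i 1))
          (ρ (CliffordAlgebra.ι (Qneg d) (Pi.single j 1)) (pd i (pd j g) 0)))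
        + ∑ i, ∑ j, ρ (CliffordAlgebra.ι (Qneg d) (Pi.single i 1))
          (ρ (CliffordAlgebra.ι (Qneg d) (Pi.single j 1))
            ((ρ (Dcl d (fderiv ℝ (ω j) 0 (Pi.single i 1)).toLinearMap)) (g 0))) := by
        rw [← Finset.sum_add_distrib]
        refine Finset.sum_congr rfl fun i _ => ?_
        rw [← Finset.sum_add_distrib]
        refine Finset.sum_congr rfl fun j _ => ?_
        rw [map_add, map_add]
    _ = -(∑ i, pd i (pd i g) 0)
        + ∑ i, ∑ j, ρ (CliffordAlgebra.ι (Qneg d) (Pi.single i 1))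
          (ρ (CliffordAlgebra.ι (Qneg d) (Pi.single j 1))
            ((ρ (Dcl d (fderiv ℝ (ω j) 0 (Pi.single i 1)).toLinearMap)) (g 0))) := by
        congr 1
        exact Lich.claim1 ρ (fun i j => pd i (pd j g) 0) (fun i j => Lich.pd_symm hg i j)
    _ = -(∑ i, pd i (pd i g) 0)
        + (ρ (∑ i, ∑ j, Lich.cc i * Lich.cc j *
            Dcl d (fderiv ℝ (ω j) 0 (Pi.single i 1)).toLinearMap)) (g 0) := by
        congr 1
        rw [map_sum, LinearMap.sum_apply]
        refine Finset.sum_congr rfl fun i _ => ?_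
        rw [map_sum, LinearMap.sum_apply]
        refine Finset.sum_congr rfl fun j _ => ?_
        rw [map_mul, map_mul]
        rfl
    _ = -(∑ i, pd i (pd i g) 0)
        + (ρ (-(∑ i, Dcl d (fderiv ℝ (ω i) 0 (Pi.single i 1)).toLinearMap)
            + ((∑ i, ∑ j, (R i j (Pi.single j 1)) i)/2/2)
              • (1 : CliffordAlgebra (Qneg d)))) (g 0) := by
        congr 2
        exact congrArg ρ (Lich.claimK
          (fun i j => (fderiv ℝ (ω j) 0 (Pi.single i 1)).toLinearMap) R hRA h1 h2 hb)
    _ = -(∑ i, nablaS ρ ω i (nablaS ρ ω i g) 0) +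
          ((∑ i, ∑ j, (R i j (Pi.single j 1)) i) / 4) • g 0 := by
        rw [map_add, map_neg, map_sum, map_smul, map_one]
        rw [Finset.sum_congr rfl fun i (_ : i ∈ Finset.univ) => rhs_eval i]
        rw [Finset.sum_add_distrib]
        simp only [LinearMap.add_apply, LinearMap.neg_apply, LinearMap.sum_apply,
          LinearMap.smul_apply, Module.End.one_apply]
        rw [show ((∑ i, ∑ j, (R i j (Pi.single j 1)) i)/2/2 : ℝ)
          = (∑ i, ∑ j, (R i j (Pi.single j 1)) i)/4 by ring]
        abel
end
end
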